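/- A subset X of a periodic (torsion) abelian group G is midconvex if and only if for every x ∈ X, the set X - x is a subgroup of G such that every element of the quotient group G/(X - x) has odd order. -/

import Mathlib

def Midconvex {G : Type*} [AddCommGroup G] (X : Set G) : Prop :=
  ∀ x ∈ X, ∀ y ∈ X, ∀ z : G, 2 • z = x + y → z ∈ X

/-!
For `x ∈ X` one shows that `{g | x + g ∈ X}` is a subgroup. Since `2 (y + t) = y + (y + 2t)`,
iterated halving makes `X` stable under adding elements of `2`-power order. For `a` of order
`n = 2^s m` with `m` odd, pick `K` with `m ∣ 2^K - 1` and `n ≤ 2^K`; then `x + 2^K a` differs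
from `x + a` by an element of `2`-power order, so it lies in `X`, and the dyadic points `x + p a`,
`p ≤ 2^K`, of the segment from `x` to `x + 2^K a` exhaust `x + ℤ a`. Closure under addition
follows by taking the midpoint of `x + 2a` and `x + 2b`. In the quotient, halving means there is
no `2`-torsion, i.e. every order is odd; conversely odd orders make halving unique modulo the
subgroup, which is midconvexity.
-/

theorem exists_le_two_pow_and_dvd_two_pow_mul_two_pow_sub_one {n : ℕ} (hn : n ≠ 0) :
    ∃ s K : ℕ, n ≤ 2 ^ K ∧ n ∣ 2 ^ s * (2 ^ K - 1) := by
  obtain ⟨s, m, hm, rfl⟩ := Nat.exists_eq_two_pow_mul_odd hn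
  have hφ : 0 < m.totient := Nat.totient_pos.mpr hm.pos
  refine ⟨s, m.totient * (2 ^ s * m), ?_, mul_dvd_mul_left _ ?_⟩
  · exact Nat.lt_two_pow_self.le.trans
      (Nat.pow_le_pow_right two_pos (Nat.le_mul_of_pos_left _ hφ))
  · have h : 2 ^ (m.totient * (2 ^ s * m)) ≡ 1 [MOD m] := by
      rw [pow_mul, ← one_pow (2 ^ s * m)]
      exact (Nat.ModEq.pow_totient (Nat.coprime_two_left.mpr hm)).pow _
    exact (Nat.modEq_iff_dvd' Nat.one_le_two_pow).mp h.symm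

theorem eq_zero_of_odd_addOrderOf_of_two_nsmul_eq_zero {A : Type*} [AddMonoid A] {a : A}
    (hodd : Odd (addOrderOf a)) (h : 2 • a = 0) : a = 0 :=
  AddMonoid.addOrderOf_eq_one_iff.mp
    (hodd.coprime_two_right.eq_one_of_dvd (addOrderOf_dvd_of_nsmul_eq_zero h))

theorem IsOfFinAddOrder.odd_addOrderOf {A : Type*} [AddMonoid A] {a : A}
    (ha : IsOfFinAddOrder a) (h : ∀ b : A, 2 • b = 0 → b = 0) : Odd (addOrderOf a) := by
  by_contra heven
  obtain ⟨r, hr⟩ := Nat.not_odd_iff_even.mp heven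
  have hpos := ha.addOrderOf_pos
  have hra : r • a = 0 := h _ (by rw [← mul_nsmul', two_mul, ← hr, addOrderOf_nsmul_eq_zero])
  have := Nat.le_of_dvd (by omega) (addOrderOf_dvd_of_nsmul_eq_zero hra)
  omega

namespace Midconvex

variable {G : Type*} [AddCommGroup G] {X : Set G}

theorem add_mem_of_two_pow_nsmul_eq_zero (hX : Midconvex X) {y : G} (hy : y ∈ X) :
    ∀ {s : ℕ} {t : G}, 2 ^ s • t = 0 → y + t ∈ X
  | 0, t, ht => by simp_all
  | s + 1, t, ht => by
    have h2t : y + 2 • t ∈ X :=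
      hX.add_mem_of_two_pow_nsmul_eq_zero hy (by rwa [← mul_nsmul, ← pow_succ'])
    exact hX y hy _ h2t _ (by simp only [smul_add, two_nsmul]; abel)

theorem add_nsmul_mem_of_le_two_pow (hX : Midconvex X) {u : G} (hu : u ∈ X) :
    ∀ {k p : ℕ} {c : G}, u + 2 ^ k • c ∈ X → p ≤ 2 ^ k → u + p • c ∈ X
  | 0, p, c, hc, hp => by
    interval_cases p
    · simpa using hu
    · simpa using hc
  | k + 1, p, c, hc, hp => by
    have hc' : u + 2 ^ k • (2 • c) ∈ X := by rwa [← mul_nsmul, ← pow_succ']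
    have hk := Nat.pow_succ 2 k
    refine hX _ (hX.add_nsmul_mem_of_le_two_pow hu hc' (p := p / 2) (by omega))
      _ (hX.add_nsmul_mem_of_le_two_pow hu hc' (p := (p + 1) / 2) (by omega)) _ ?_
    conv_lhs => rw [show p = p / 2 + (p + 1) / 2 by omega]
    simp only [smul_add, add_nsmul, smul_comm _ 2]
    abel

theorem add_nsmul_mem (hX : Midconvex X) {x a : G} (hx : x ∈ X) (ha : IsOfFinAddOrder a)
    (hxa : x + a ∈ X) (j : ℕ) : x + j • a ∈ X := by
  obtain ⟨s, K, hle, hdvd⟩ :=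
    exists_le_two_pow_and_dvd_two_pow_mul_two_pow_sub_one ha.addOrderOf_pos.ne'
  have hK : x + 2 ^ K • a ∈ X := by
    have h2 : 2 ^ s • ((2 ^ K - 1) • a) = 0 := by
      rw [← mul_nsmul']
      exact addOrderOf_dvd_iff_nsmul_eq_zero.mp hdvd
    have h := hX.add_mem_of_two_pow_nsmul_eq_zero hxa h2
    rwa [add_assoc, ← succ_nsmul', Nat.sub_add_cancel Nat.one_le_two_pow] at h
  rw [← mod_addOrderOf_nsmul]
  exact hX.add_nsmul_mem_of_le_two_pow hx hK ((Nat.mod_lt _ ha.addOrderOf_pos).le.trans hle)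

def addSubgroup (hX : Midconvex X) (htor : IsAddTorsion G) {x : G} (hx : x ∈ X) :
    AddSubgroup G where
  carrier := {g | x + g ∈ X}
  zero_mem' := by simpa using hx
  add_mem' {a b} ha hb :=
    hX _ (hX.add_nsmul_mem hx (htor a) ha 2) _ (hX.add_nsmul_mem hx (htor b) hb 2) _
      (by simp only [smul_add, two_nsmul]; abel)
  neg_mem' {a} ha := by
    obtain ⟨j, hj⟩ := (htor a).mem_multiples_iff_mem_zmultiples.mpr
      (neg_mem (AddSubgroup.mem_zmultiples a))
    change x + -a ∈ X
    rw [← hj]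
    exact hX.add_nsmul_mem hx (htor a) ha j

variable (hX : Midconvex X) (htor : IsAddTorsion G) {x : G} (hx : x ∈ X)

theorem mem_addSubgroup {g : G} : g ∈ hX.addSubgroup htor hx ↔ x + g ∈ X := Iff.rfl

theorem coe_addSubgroup : (hX.addSubgroup htor hx : Set G) = (· - x) '' X := by
  ext g
  refine ⟨fun hg => ⟨x + g, hg, add_sub_cancel_left x g⟩, ?_⟩
  rintro ⟨y, hy, rfl⟩
  simpa [mem_addSubgroup] using hy

theorem mem_addSubgroup_of_two_nsmul_mem {g : G} (hg : 2 • g ∈ hX.addSubgroup htor hx) :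
    g ∈ hX.addSubgroup htor hx :=
  hX x hx _ hg _ (by simp only [smul_add, two_nsmul]; abel)

end Midconvex

theorem stmt_7 {G : Type*} [AddCommGroup G]
    (htor : ∀ g : G, ∃ n : ℕ, 0 < n ∧ n • g = 0) (X : Set G) :
    Midconvex X ↔
      ∀ x ∈ X, ∃ H : AddSubgroup G, (H : Set G) = (· - x) '' X ∧
        ∀ q : G ⧸ H, Odd (addOrderOf q) := by
  have hG : IsAddTorsion G := fun g => isOfFinAddOrder_iff_nsmul_eq_zero.mpr (htor g)
  constructor
  · intro hX x hx
    refine ⟨hX.addSubgroup hG hx, hX.coe_addSubgroup hG hx, fun q => ?_⟩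
    refine (hG.of_surjective (QuotientAddGroup.mk'_surjective _) q).odd_addOrderOf ?_
    intro b hb
    obtain ⟨g, rfl⟩ := QuotientAddGroup.mk_surjective b
    rw [← QuotientAddGroup.mk_nsmul, QuotientAddGroup.eq_zero_iff] at hb
    exact (QuotientAddGroup.eq_zero_iff g).mpr (hX.mem_addSubgroup_of_two_nsmul_mem hG hx hb)
  · intro h x hx y hy z hz
    obtain ⟨H, hH, hodd⟩ := h x hx
    have hmem : ∀ g, g ∈ H ↔ g + x ∈ X := fun g => by
      rw [← SetLike.mem_coe, hH]
      simp [sub_eq_iff_eq_add]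
    have hzx : ((z - x : G) : G ⧸ H) = 0 := by
      refine eq_zero_of_odd_addOrderOf_of_two_nsmul_eq_zero (hodd _) ?_
      rw [← QuotientAddGroup.mk_nsmul, QuotientAddGroup.eq_zero_iff, hmem, smul_sub, hz]
      simpa [two_nsmul] using hy
    simpa using (hmem _).mp ((QuotientAddGroup.eq_zero_iff _).mp hzx)
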